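/- arXiv:2104.00907 — 2 statements merged into one kernel-verified Lean document; each statement's English description precedes it below -/
import Mathlib

section
/- Let n ≥ 4 be an even integer and let A, B be real numbers with −1 ≤ B < A ≤ 1 satisfying 2(1−B²) ≤ (n+1)(1−AB) ≤ (n+1)(1−B²) and (n+1)A ≤ 2B + n − 1. Then the open disk {w ∈ ℂ : |w − (1−AB)/(1−B²)| < (A−B)/(1−B²)} is contained in Ω_{nL} = φ_{nL}(𝔻). (Consequently the Janowski class S*[A,B] is contained in S*_{nL}.) -/
/-!
On the unit circle `|n z + z^n| ≥ n - 1`, so `φ_{nL}` maps `∂𝔻` outside the disk of radius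
`(n-1)/(n+1)` about `1`. A disk `D(c, r)` with real centre and `r + |1 - c| ≤ (n-1)/(n+1)` therefore
misses `φ_{nL}(∂𝔻)`, which contains the boundary of the open set `Ω_{nL}`. Since `n` is even,
`φ_{nL}` maps `(-1, 1)` onto `(2/(n+1), 2)`, so the centre `c` lies in `Ω_{nL}`, and the connected
disk is contained in `Ω_{nL}`. For the Janowski disk, `r + (1 - c) = (A - B)/(1 - B)`, and the bound
`(A - B)/(1 - B) ≤ (n-1)/(n+1)` is the hypothesis `(n+1) A ≤ 2B + n - 1`.
-/

open Complex Metric Set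

/-- The function φ_{nL}(z) = 1 + n z/(n+1) + z^n/(n+1). -/
noncomputable def phinL (n : ℕ) (z : ℂ) : ℂ :=
  1 + (n : ℂ) * z / ((n : ℂ) + 1) + z ^ n / ((n : ℂ) + 1)

/-- Ω_{nL} = φ_{nL}(𝔻), the image of the open unit disk. -/
def OmeganL (n : ℕ) : Set ℂ := phinL n '' ball (0 : ℂ) 1

/-- f is analytic on the unit disk with f(0) = 0 and f'(0) = 1. -/
def IsNormalizedAnalytic (f : ℂ → ℂ) : Prop :=
  AnalyticOnNhd ℂ f (ball (0 : ℂ) 1) ∧ f 0 = 0 ∧ deriv f 0 = 1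

/-- p is subordinate to ψ on the unit disk. -/
def Subord (p ψ : ℂ → ℂ) : Prop :=
  ∃ ω : ℂ → ℂ, AnalyticOnNhd ℂ ω (ball (0 : ℂ) 1) ∧ ω 0 = 0 ∧
    (∀ z ∈ ball (0 : ℂ) 1, ω z ∈ ball (0 : ℂ) 1) ∧
    (∀ z ∈ ball (0 : ℂ) 1, p z = ψ (ω z))

/-- Membership in the class S*_{nL}. -/
def MemSnL (n : ℕ) (f : ℂ → ℂ) : Prop :=
  IsNormalizedAnalytic f ∧ (∀ z ∈ ball (0 : ℂ) 1, z ≠ 0 → f z ≠ 0) ∧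
  Subord (fun z => if z = 0 then 1 else z * deriv f z / f z) (phinL n)

section

variable {n : ℕ}

theorem phinL_ofReal (n : ℕ) (t : ℝ) :
    phinL n t = ((1 + n * t / (n + 1) + t ^ n / (n + 1) : ℝ) : ℂ) := by
  unfold phinL; push_cast; ring

theorem differentiable_phinL (n : ℕ) : Differentiable ℂ (phinL n) := by
  unfold phinL; fun_prop (disch := exact_mod_cast n.succ_ne_zero)

theorem isOpen_omeganL (hn : n ≠ 0) : IsOpen (OmeganL n) := by
  have hφ : AnalyticOnNhd ℂ (phinL n) univ := fun z _ => (differentiable_phinL n).analyticAt z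
  refine (hφ.is_constant_or_isOpenMap.resolve_left ?_) _ isOpen_ball
  rintro ⟨w, hw⟩
  have h0 : phinL n 0 = 1 := by simp [phinL, hn]
  have h1 : phinL n 1 = 2 := by
    unfold phinL; field_simp; ring
  have h01 := (hw 0).trans (hw 1).symm
  rw [h0, h1] at h01
  norm_num at h01

theorem closure_omeganL : closure (OmeganL n) = phinL n '' closedBall 0 1 := by
  rw [OmeganL, ← image_closure_of_isCompact, closure_ball _ one_ne_zero]
  · rw [closure_ball _ one_ne_zero]; exact isCompact_closedBall _ _
  · exact (differentiable_phinL n).continuous.continuousOn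

theorem le_norm_phinL_sub_one {z : ℂ} (hz : ‖z‖ = 1) :
    ((n : ℝ) - 1) / (n + 1) ≤ ‖phinL n z - 1‖ := by
  have hnum : (n : ℝ) - 1 ≤ ‖(n : ℂ) * z + z ^ n‖ := by
    simpa [norm_pow, hz] using norm_sub_norm_le ((n : ℂ) * z) (-z ^ n)
  have hden : ‖(n : ℂ) + 1‖ = n + 1 := by exact_mod_cast norm_natCast (n + 1)
  have : phinL n z - 1 = ((n : ℂ) * z + z ^ n) / (n + 1) := by unfold phinL; ring
  rw [this, norm_div, hden]
  gcongr

theorem ofReal_mem_omeganL (hn : Even n) {c : ℝ} (hc : 2 / (n + 1) < c) (hc' : c < 2) :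
    (c : ℂ) ∈ OmeganL n := by
  set g : ℝ → ℝ := fun t => 1 + n * t / (n + 1) + t ^ n / (n + 1)
  have hg₀ : g (-1) = 2 / (n + 1) := by simp only [g, hn.neg_one_pow]; field_simp; ring
  have hg₁ : g 1 = 2 := by simp only [g, one_pow]; field_simp; ring
  obtain ⟨t, ht, rfl⟩ := intermediate_value_Ioo (by norm_num : (-1 : ℝ) ≤ 1)
    (by fun_prop : Continuous g).continuousOn (by rw [hg₀, hg₁]; exact ⟨hc, hc'⟩)
  refine ⟨t, ?_, phinL_ofReal n t⟩
  rwa [mem_ball_zero_iff, norm_real, Real.norm_eq_abs, abs_lt]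

theorem ball_subset_omeganL (hn : n ≠ 0) (he : Even n) {c r : ℝ} (hr : 0 < r)
    (hcr : r + |1 - c| ≤ ((n : ℝ) - 1) / (n + 1)) : ball (c : ℂ) r ⊆ OmeganL n := by
  have hn' : (0 : ℝ) < n + 1 := by positivity
  have hq : ((n : ℝ) - 1) / (n + 1) = 1 - 2 / (n + 1) := by field_simp; ring
  have hc : c ∈ Ioo (2 / ((n : ℝ) + 1)) 2 := by
    have := abs_lt.1 (show |1 - c| < 1 - 2 / (n + 1) by linarith)
    constructor <;> linarith [div_pos two_pos hn']
  refine (convex_ball _ _).isPreconnected.subset_of_closure_inter_subset (isOpen_omeganL hn)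
    ⟨c, mem_ball_self hr, ofReal_mem_omeganL he hc.1 hc.2⟩ ?_
  rintro _ ⟨hcl, hw⟩
  rw [closure_omeganL] at hcl
  obtain ⟨z, hz, rfl⟩ := hcl
  refine ⟨z, mem_ball_zero_iff.2 <| (mem_closedBall_zero_iff.1 hz).lt_of_ne fun hz1 => ?_, rfl⟩
  have hfar : ((n : ℝ) - 1) / (n + 1) - |1 - c| ≤ ‖phinL n z - c‖ := by
    have := norm_sub_le_norm_sub_add_norm_sub (phinL n z) (c : ℂ) 1
    rw [← ofReal_one, ← ofReal_sub, norm_real, Real.norm_eq_abs, abs_sub_comm, ofReal_one] at this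
    linarith [le_norm_phinL_sub_one (n := n) hz1]
  rw [mem_ball, dist_eq_norm] at hw
  linarith

end

theorem stmt10_general (n : ℕ) (hn : 4 ≤ n) (hne : Even n) (A B : ℝ)
    (hBA : B < A) (hA : A ≤ 1)
    (h2 : ((n : ℝ) + 1) * (1 - A * B) ≤ ((n : ℝ) + 1) * (1 - B ^ 2))
    (h3 : ((n : ℝ) + 1) * A ≤ 2 * B + (n : ℝ) - 1) :
    ball ((((1 - A * B) / (1 - B ^ 2) : ℝ)) : ℂ) ((A - B) / (1 - B ^ 2)) ⊆ OmeganL n := by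
  have hn' : (0 : ℝ) < n + 1 := by positivity
  have hB : 0 ≤ B := by nlinarith [(mul_le_mul_iff_of_pos_left hn').1 h2]
  have hD : 0 < 1 - B ^ 2 := by nlinarith
  refine ball_subset_omeganL (by omega) hne (div_pos (by linarith) hD) ?_
  have hc : (1 - A * B) / (1 - B ^ 2) ≤ 1 := by rw [div_le_one hD]; nlinarith
  have hsum : (A - B) / (1 - B ^ 2) + (1 - (1 - A * B) / (1 - B ^ 2)) = (A - B) / (1 - B) := by
    have : 1 - B ≠ 0 := by linarith
    field_simp
    ring
  rw [abs_of_nonneg (by linarith), hsum, div_le_div_iff₀ (by linarith) hn']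
  linarith

theorem stmt10 (n : ℕ) (hn : 4 ≤ n) (hne : Even n) (A B : ℝ)
    (hB : -1 ≤ B) (hBA : B < A) (hA : A ≤ 1)
    (h1 : 2 * (1 - B ^ 2) ≤ ((n : ℝ) + 1) * (1 - A * B))
    (h2 : ((n : ℝ) + 1) * (1 - A * B) ≤ ((n : ℝ) + 1) * (1 - B ^ 2))
    (h3 : ((n : ℝ) + 1) * A ≤ 2 * B + (n : ℝ) - 1) :
    ball ((((1 - A * B) / (1 - B ^ 2) : ℝ)) : ℂ) ((A - B) / (1 - B ^ 2)) ⊆ OmeganL n :=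
  stmt10_general n hn hne A B hBA hA h2 h3
end

section
/- Let n ≥ 4 be an even integer and let 0 < α ≤ 1. Let f be a normalized analytic function on 𝔻 with f(z) ≠ 0 for all z ∈ 𝔻 \ {0}, and suppose the function p defined by p(z) = z f'(z)/f(z) for z ≠ 0 and p(0) = 1 is subordinate to ψ(z) = 1 + z/(1 − αz²). Then for every z with 0 < |z| < ( √((n+1)² + 4α(n−1)²) − (n+1) ) / (2α(n−1)), one has z f'(z)/f(z) ∈ Ω_{nL}. (This is the S*_{nL}-radius of the class BS(α).) -/
open Complex Metric Set

/-! By the Schwarz lemma `w = ω z` satisfies `‖w‖ ≤ ‖z‖`, so `p z - 1 = w / (1 - α w²)` has norm at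
most `‖z‖ / (1 - α ‖z‖²)`, which is below `(n - 1) / (n + 1)` exactly when `‖z‖` lies below the
positive root of `α (n - 1) t² + (n + 1) t - (n - 1)`, the radius of the theorem. It remains that
the disk `‖u - 1‖ < (n - 1) / (n + 1)` lies in `Ω_{nL}`: solving `φ_{nL} x = u` amounts to
`x + xⁿ / n = v` with `‖v‖ < 1 - 1 / n`, and `x ↦ v - xⁿ / n` is a contraction of the closed disk
of radius `‖v‖ + 1 / n < 1`. -/

open scoped NNReal

section PowerPerturbation

variable {𝕜 : Type*} [RCLike 𝕜]

lemma lipschitzOnWith_const_sub_pow_div (n : ℕ) (v : 𝕜) (r : ℝ≥0) :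
    LipschitzOnWith (r ^ (n - 1)) (fun x : 𝕜 => v - x ^ n / n) (closedBall 0 r) := by
  refine (convex_closedBall 0 r).lipschitzOnWith_of_nnnorm_deriv_le (fun x _ => by fun_prop)
    fun x hx => ?_
  rcases Nat.eq_zero_or_pos n with rfl | hn
  · simp
  have hderiv : deriv (fun x : 𝕜 => v - x ^ n / n) x = -x ^ (n - 1) := by
    have hn0 : (n : 𝕜) ≠ 0 := by exact_mod_cast hn.ne'
    simp [hn0]
  rw [hderiv, nnnorm_neg, nnnorm_pow]
  gcongr
  rw [mem_closedBall_zero_iff] at hx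
  exact_mod_cast hx

lemma exists_mem_ball_add_pow_div_eq {n : ℕ} (hn : 2 ≤ n) {v : 𝕜} (hv : ‖v‖ < 1 - 1 / n) :
    ∃ x ∈ ball (0 : 𝕜) 1, x + x ^ n / n = v := by
  set r : ℝ≥0 := ⟨‖v‖ + 1 / n, by positivity⟩
  have hr1 : (r : ℝ) < 1 := by change ‖v‖ + 1 / n < 1; linarith
  have hmaps : MapsTo (fun x : 𝕜 => v - x ^ n / n) (closedBall 0 r) (closedBall 0 r) := by
    intro x hx
    rw [mem_closedBall_zero_iff] at hx ⊢
    have hxn : ‖x‖ ^ n ≤ 1 := pow_le_one₀ (norm_nonneg x) (hx.trans hr1.le)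
    calc ‖v - x ^ n / n‖ ≤ ‖v‖ + ‖x‖ ^ n / n := by
          simpa [norm_pow, RCLike.norm_natCast] using norm_sub_le v (x ^ n / n)
      _ ≤ ‖v‖ + 1 / n := by gcongr
  have hcontr : ContractingWith (r ^ (n - 1)) (hmaps.restrict _ _ _) :=
    ⟨pow_lt_one₀ r.2 (by exact_mod_cast hr1) (by omega),
      (lipschitzOnWith_const_sub_pow_div n v r).mapsToRestrict hmaps⟩
  obtain ⟨x, hx, hfix, -⟩ := hcontr.exists_fixedPoint' isClosed_closedBall.isComplete hmaps
    (mem_closedBall_self r.2) (edist_ne_top _ _)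
  exact ⟨x, closedBall_subset_ball hr1 hx, by linear_combination -hfix.eq⟩

end PowerPerturbation

lemma ball_subset_OmeganL {n : ℕ} (hn : 2 ≤ n) :
    ball (1 : ℂ) ((n - 1) / (n + 1)) ⊆ OmeganL n := by
  intro u hu
  have hn0 : (0 : ℝ) < n := by positivity
  have hnc : (n : ℂ) ≠ 0 := by exact_mod_cast hn0.ne'
  have hn1 : (n : ℂ) + 1 ≠ 0 := by exact_mod_cast (Nat.succ_ne_zero n)
  have hv : ‖(u - 1) * (n + 1) / n‖ < 1 - 1 / n := by
    rw [mem_ball, dist_eq] at hu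
    rw [norm_div, norm_mul, Complex.norm_natCast,
      show (n : ℂ) + 1 = ((n + 1 : ℕ) : ℂ) by push_cast; ring, Complex.norm_natCast]
    push_cast
    rw [lt_div_iff₀ (by positivity)] at hu
    rw [div_lt_iff₀ hn0, sub_mul, one_div_mul_cancel hn0.ne', one_mul]
    linarith
  obtain ⟨x, hx, hxu⟩ := exists_mem_ball_add_pow_div_eq hn hv
  refine ⟨x, hx, ?_⟩
  rw [phinL]
  field_simp at hxu ⊢
  linear_combination hxu

lemma quadratic_neg_of_lt_root {a b c w : ℝ} (ha : 0 < a) (hw : 0 ≤ 2 * a * w + b)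
    (hlt : w < (√(b ^ 2 + 4 * a * c) - b) / (2 * a)) : a * w ^ 2 + b * w - c < 0 := by
  rw [lt_div_iff₀ (by positivity)] at hlt
  have hD : 0 ≤ b ^ 2 + 4 * a * c := by
    by_contra! h
    rw [Real.sqrt_eq_zero_of_nonpos h.le] at hlt
    linarith
  have hsq : (2 * a * w + b) ^ 2 < b ^ 2 + 4 * a * c := by
    rw [← Real.sq_sqrt hD]
    exact pow_lt_pow_left₀ (by linarith) hw two_ne_zero
  nlinarith

lemma norm_div_one_sub_mul_sq_le {c w : ℂ} (h : ‖c‖ * ‖w‖ ^ 2 < 1) :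
    ‖w / (1 - c * w ^ 2)‖ ≤ ‖w‖ / (1 - ‖c‖ * ‖w‖ ^ 2) := by
  rw [norm_div]
  refine div_le_div_of_nonneg_left (norm_nonneg w) (sub_pos.2 h) ?_
  have := norm_sub_norm_le (1 : ℂ) (c * w ^ 2)
  rw [norm_one, norm_mul, norm_pow] at this
  linarith

lemma norm_div_one_sub_mul_sq_lt {c w : ℂ} {m M : ℝ} (hm : 0 < m) (hM : 0 < M)
    (hq : ‖c‖ * m * ‖w‖ ^ 2 + M * ‖w‖ - m < 0) :
    ‖w / (1 - c * w ^ 2)‖ < m / M := by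
  have h : ‖c‖ * ‖w‖ ^ 2 < 1 := by
    by_contra! h
    nlinarith [norm_nonneg w]
  refine (norm_div_one_sub_mul_sq_le h).trans_lt ?_
  rw [div_lt_div_iff₀ (sub_pos.2 h) hM]
  linarith

theorem stmt12_general (n : ℕ) (hn : 4 ≤ n) (α : ℝ) (hα0 : 0 < α)
    (f : ℂ → ℂ)
    (hsub : Subord (fun z => if z = 0 then 1 else z * deriv f z / f z)
      (fun z => 1 + z / (1 - (α : ℂ) * z ^ 2))) :
    ∀ z : ℂ, 0 < ‖z‖ →
      ‖z‖ <
        (Real.sqrt (((n : ℝ) + 1) ^ 2 + 4 * α * ((n : ℝ) - 1) ^ 2) - ((n : ℝ) + 1)) /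
          (2 * α * ((n : ℝ) - 1)) →
      z * deriv f z / f z ∈ OmeganL n := by
  obtain ⟨ω, hωa, hω0, hωmap, hωeq⟩ := hsub
  intro z hz0 hzρ
  have hn1 : (0 : ℝ) < n - 1 := by
    have : (4 : ℝ) ≤ n := by exact_mod_cast hn
    linarith
  have hq : ∀ t : ℝ, 0 ≤ t → t ≤ ‖z‖ → α * (n - 1) * t ^ 2 + (n + 1) * t - (n - 1) < 0 := by
    intro t ht0 htz
    refine quadratic_neg_of_lt_root (by positivity) (by positivity) ?_
    have := htz.trans_lt hzρ
    rwa [show 4 * α * ((n : ℝ) - 1) ^ 2 = 4 * (α * (n - 1)) * (n - 1) by ring,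
      show 2 * α * ((n : ℝ) - 1) = 2 * (α * (n - 1)) by ring] at this
  have hz1 : ‖z‖ < 1 := by
    have : 0 ≤ α * (n - 1) * ‖z‖ ^ 2 := by positivity
    nlinarith [hq ‖z‖ hz0.le le_rfl]
  have hz : z ∈ ball (0 : ℂ) 1 := mem_ball_zero_iff.2 hz1
  have hωz : ‖ω z‖ ≤ ‖z‖ := Complex.norm_le_norm_of_mapsTo_ball hωa.differentiableOn
    (fun x hx => ball_subset_closedBall (hωmap x hx)) hω0 hz1
  have hpz := hωeq z hz
  dsimp only at hpz
  rw [if_neg (norm_pos_iff.1 hz0)] at hpz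
  rw [hpz]
  refine ball_subset_OmeganL (by omega) ?_
  rw [mem_ball, dist_eq, add_sub_cancel_left]
  refine norm_div_one_sub_mul_sq_lt (by linarith) (by linarith) ?_
  rw [Complex.norm_of_nonneg hα0.le]
  exact hq _ (norm_nonneg _) hωz

theorem stmt12 (n : ℕ) (hn : 4 ≤ n) (hne : Even n) (α : ℝ) (hα0 : 0 < α) (hα1 : α ≤ 1)
    (f : ℂ → ℂ) (hf : IsNormalizedAnalytic f)
    (hfz : ∀ z ∈ ball (0 : ℂ) 1, z ≠ 0 → f z ≠ 0)
    (hsub : Subord (fun z => if z = 0 then 1 else z * deriv f z / f z)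
      (fun z => 1 + z / (1 - (α : ℂ) * z ^ 2))) :
    ∀ z : ℂ, 0 < ‖z‖ →
      ‖z‖ <
        (Real.sqrt (((n : ℝ) + 1) ^ 2 + 4 * α * ((n : ℝ) - 1) ^ 2) - ((n : ℝ) + 1)) /
          (2 * α * ((n : ℝ) - 1)) →
      z * deriv f z / f z ∈ OmeganL n :=
  stmt12_general n hn α hα0 f hsub
end
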